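/- arXiv:2006.06990 — 4 statements merged into one kernel-verified Lean document; each statement's English description precedes it below -/
import Mathlib

section
/- Suppose φⁿ : ZMod J → ℝ satisfies γ₋ ≤ φⁿⱼ ≤ γ₊ for all j, and φⁿ⁺¹ : ZMod J → ℝ satisfies (1+2λ)φⁿ⁺¹ⱼ = φⁿⱼ + λφⁿ⁺¹ⱼ₊₁ + λφⁿ⁺¹ⱼ₋₁ − Δt·f(φⁿⱼ) for all j, where λ > 0, f(γ₊) = 0, and 1 − Δt·f'(u) ≥ 0 for all u ∈ [γ₋,γ₊] (f being C¹ on [γ₋,γ₊]). Then max_j φⁿ⁺¹ⱼ ≤ γ₊. -/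
/-! The map `g u = u - Δt * f u` is nondecreasing on `[γm, γp]` because `g' = 1 - Δt * f' ≥ 0`,
and `g γp = γp` since `f γp = 0`. At an index where `φⁿ⁺¹` is maximal both neighbours are no
larger, so the scheme gives `φⁿ⁺¹ ≤ g (φⁿ) ≤ g γp = γp` there, hence everywhere. -/

open Set

lemma monotoneOn_sub_mul_of_mul_deriv_le_one {D : Set ℝ} (hD : Convex ℝ D) {Δt : ℝ}
    {f f' : ℝ → ℝ} (hderiv : ∀ u ∈ D, HasDerivAt f (f' u) u)
    (hstep : ∀ u ∈ D, Δt * f' u ≤ 1) :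
    MonotoneOn (fun u => u - Δt * f u) D := by
  have hg : ∀ u ∈ D, HasDerivAt (fun u => u - Δt * f u) (1 - Δt * f' u) u := fun u hu =>
    (hasDerivAt_id u).sub ((hderiv u hu).const_mul Δt)
  refine monotoneOn_of_hasDerivWithinAt_nonneg hD
    (fun u hu => (hg u hu).continuousAt.continuousWithinAt)
    (fun u hu => (hg u (interior_subset hu)).hasDerivWithinAt)
    (fun u hu => sub_nonneg.mpr (hstep u (interior_subset hu)))

lemma le_of_mul_eq_add_of_neighbors_le {lam a b c r : ℝ} (hlam : 0 ≤ lam) (hb : b ≤ a)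
    (hc : c ≤ a) (h : (1 + 2 * lam) * a = r + lam * b + lam * c) : a ≤ r := by
  nlinarith [mul_le_mul_of_nonneg_left hb hlam, mul_le_mul_of_nonneg_left hc hlam]

theorem semiImplicit_max_upper_general (J : ℕ) [NeZero J] (Δt lam γm γp : ℝ)
    (hlam : 0 < lam) (f f' : ℝ → ℝ)
    (hderiv : ∀ u ∈ Set.Icc γm γp, HasDerivAt f (f' u) u)
    (hfp : f γp = 0)
    (hstep : ∀ u ∈ Set.Icc γm γp, Δt * f' u ≤ 1)
    (φn φn1 : ZMod J → ℝ)
    (hbound : ∀ j, γm ≤ φn j ∧ φn j ≤ γp)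
    (hscheme : ∀ j, (1 + 2 * lam) * φn1 j =
      φn j + lam * φn1 (j + 1) + lam * φn1 (j - 1) - Δt * f (φn j)) :
    ∀ j, φn1 j ≤ γp := by
  intro j
  obtain ⟨j₀, hj₀⟩ := Finite.exists_max φn1
  have hmono := monotoneOn_sub_mul_of_mul_deriv_le_one (convex_Icc γm γp) hderiv hstep
  have hγp : γp ∈ Icc γm γp := ⟨(hbound j₀).1.trans (hbound j₀).2, le_rfl⟩
  calc φn1 j ≤ φn1 j₀ := hj₀ j
    _ ≤ φn j₀ - Δt * f (φn j₀) :=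
      le_of_mul_eq_add_of_neighbors_le hlam.le (hj₀ (j₀ + 1)) (hj₀ (j₀ - 1))
        (by rw [hscheme j₀]; ring)
    _ ≤ γp - Δt * f γp := hmono (hbound j₀) hγp (hbound j₀).2
    _ = γp := by rw [hfp, mul_zero, sub_zero]

/-- One-step upper bound (maximum principle, upper part) for the semi-implicit scheme. -/
theorem semiImplicit_max_upper (J : ℕ) [NeZero J] (Δt lam γm γp : ℝ)
    (hΔt : 0 < Δt) (hlam : 0 < lam) (hγ : γm < γp) (f f' : ℝ → ℝ)
    (hderiv : ∀ u ∈ Set.Icc γm γp, HasDerivAt f (f' u) u)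
    (hfp : f γp = 0)
    (hstep : ∀ u ∈ Set.Icc γm γp, Δt * f' u ≤ 1)
    (φn φn1 : ZMod J → ℝ)
    (hbound : ∀ j, γm ≤ φn j ∧ φn j ≤ γp)
    (hscheme : ∀ j, (1 + 2 * lam) * φn1 j =
      φn j + lam * φn1 (j + 1) + lam * φn1 (j - 1) - Δt * f (φn j)) :
    ∀ j, φn1 j ≤ γp :=
  semiImplicit_max_upper_general J Δt lam γm γp hlam f f' hderiv hfp hstep φn φn1 hbound hscheme
end

section
/- Discrete maximum principle for the semi-implicit scheme: let φ : ℕ → ZMod J → ℝ satisfy, for every n and j, (1+2λ)φ(n+1)ⱼ = φ(n)ⱼ + λφ(n+1)ⱼ₊₁ + λφ(n+1)ⱼ₋₁ − Δt·f(φ(n)ⱼ), with λ > 0, f(γ₋) = f(γ₊) = 0, Δt·f'(u) ≤ 1 for u ∈ [γ₋,γ₊], and γ₋ ≤ φ(0)ⱼ ≤ γ₊ for all j. Then γ₋ ≤ φ(n)ⱼ ≤ γ₊ for all n ≥ 0 and all j. -/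
/-!
Write `g u = u - Δt * f u`, so that the scheme reads
`(1 + 2λ) φ(n+1)ⱼ = g (φ(n)ⱼ) + λ φ(n+1)ⱼ₊₁ + λ φ(n+1)ⱼ₋₁`.
The time-step restriction makes `g` nondecreasing on `[γ₋, γ₊]`, and since `f` vanishes at the
endpoints, `g` fixes them; hence `g` maps `[γ₋, γ₊]` into itself. At an index where `φ(n+1)`
is maximal both neighbours are at most the maximum, so the maximum is at most `g (φ(n)ⱼ) ≤ γ₊`;
symmetrically at a minimum. Induction on `n` concludes.
-/

open Set

theorem monotoneOn_sub_mul_of_mul_deriv_le_one_s3 {f f' : ℝ → ℝ} {c a b : ℝ}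
    (hf : ∀ u ∈ Icc a b, HasDerivAt f (f' u) u) (hc : ∀ u ∈ Icc a b, c * f' u ≤ 1) :
    MonotoneOn (fun u => u - c * f u) (Icc a b) := by
  have hg : ∀ u ∈ Icc a b, HasDerivAt (fun u => u - c * f u) (1 - c * f' u) u :=
    fun u hu => (hasDerivAt_id u).sub ((hf u hu).const_mul c)
  refine monotoneOn_of_deriv_nonneg (convex_Icc a b)
    (fun u hu => (hg u hu).continuousAt.continuousWithinAt) ?_ ?_
  · rw [interior_Icc]
    exact fun u hu => (hg u (Ioo_subset_Icc_self hu)).differentiableAt.differentiableWithinAt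
  · rw [interior_Icc]
    intro u hu
    rw [(hg u (Ioo_subset_Icc_self hu)).deriv]
    linarith [hc u (Ioo_subset_Icc_self hu)]

theorem mapsTo_sub_mul_Icc {f f' : ℝ → ℝ} {c a b : ℝ} (hab : a ≤ b)
    (hf : ∀ u ∈ Icc a b, HasDerivAt f (f' u) u) (hc : ∀ u ∈ Icc a b, c * f' u ≤ 1)
    (hfa : f a = 0) (hfb : f b = 0) :
    MapsTo (fun u => u - c * f u) (Icc a b) (Icc a b) := by
  have hmono := monotoneOn_sub_mul_of_mul_deriv_le_one_s3 hf hc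
  intro u hu
  constructor
  · simpa [hfa] using hmono (left_mem_Icc.2 hab) hu hu.1
  · simpa [hfb] using hmono hu (right_mem_Icc.2 hab) hu.2

section ImplicitStep

variable {ι : Type*} [Finite ι] {lam : ℝ} {s t : ι → ι} {ψ b : ι → ℝ}

theorem le_of_implicit_step {hi : ℝ} (hlam : 0 ≤ lam) (hb : ∀ j, b j ≤ hi)
    (h : ∀ j, (1 + 2 * lam) * ψ j = b j + lam * ψ (s j) + lam * ψ (t j)) (j : ι) :
    ψ j ≤ hi := by
  have : Nonempty ι := ⟨j⟩
  obtain ⟨k, hk⟩ := Finite.exists_max ψ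
  have hs := mul_le_mul_of_nonneg_left (hk (s k)) hlam
  have ht := mul_le_mul_of_nonneg_left (hk (t k)) hlam
  linarith [h k, hb k, hk j]

theorem mem_Icc_of_implicit_step {lo hi : ℝ} (hlam : 0 ≤ lam) (hb : ∀ j, b j ∈ Icc lo hi)
    (h : ∀ j, (1 + 2 * lam) * ψ j = b j + lam * ψ (s j) + lam * ψ (t j)) (j : ι) :
    ψ j ∈ Icc lo hi := by
  refine ⟨?_, le_of_implicit_step hlam (fun j => (hb j).2) h j⟩
  have hneg := le_of_implicit_step (ψ := -ψ) (b := -b) (s := s) (t := t) hlam (fun j => neg_le_neg (hb j).1)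
    (fun j => by simp only [Pi.neg_apply]; linarith [h j]) j
  simpa using hneg

end ImplicitStep

theorem semiImplicit_maximum_principle_general (J : ℕ) [NeZero J] (Δt lam γm γp : ℝ)
    (hlam : 0 < lam) (hγ : γm < γp) (f f' : ℝ → ℝ)
    (hderiv : ∀ u ∈ Set.Icc γm γp, HasDerivAt f (f' u) u)
    (hfm : f γm = 0) (hfp : f γp = 0)
    (hstep : ∀ u ∈ Set.Icc γm γp, Δt * f' u ≤ 1)
    (φ : ℕ → ZMod J → ℝ)
    (hinit : ∀ j, γm ≤ φ 0 j ∧ φ 0 j ≤ γp)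
    (hscheme : ∀ n j, (1 + 2 * lam) * φ (n + 1) j =
      φ n j + lam * φ (n + 1) (j + 1) + lam * φ (n + 1) (j - 1) - Δt * f (φ n j)) :
    ∀ n j, γm ≤ φ n j ∧ φ n j ≤ γp := by
  have hmaps := mapsTo_sub_mul_Icc hγ.le hderiv hstep hfm hfp
  intro n
  induction n with
  | zero => exact hinit
  | succ n ih =>
    exact mem_Icc_of_implicit_step (s := (· + 1)) (t := (· - 1)) hlam.le
      (fun j => hmaps (ih j)) (fun j => by dsimp only; linarith [hscheme n j])

/-- Discrete maximum principle for the semi-implicit scheme (Theorem 2.1). -/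
theorem semiImplicit_maximum_principle (J : ℕ) [NeZero J] (Δt lam γm γp : ℝ)
    (hΔt : 0 < Δt) (hlam : 0 < lam) (hγ : γm < γp) (f f' : ℝ → ℝ)
    (hderiv : ∀ u ∈ Set.Icc γm γp, HasDerivAt f (f' u) u)
    (hfm : f γm = 0) (hfp : f γp = 0)
    (hstep : ∀ u ∈ Set.Icc γm γp, Δt * f' u ≤ 1)
    (φ : ℕ → ZMod J → ℝ)
    (hinit : ∀ j, γm ≤ φ 0 j ∧ φ 0 j ≤ γp)
    (hscheme : ∀ n j, (1 + 2 * lam) * φ (n + 1) j =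
      φ n j + lam * φ (n + 1) (j + 1) + lam * φ (n + 1) (j - 1) - Δt * f (φ n j)) :
    ∀ n j, γm ≤ φ n j ∧ φ n j ≤ γp :=
  semiImplicit_maximum_principle_general J Δt lam γm γp hlam hγ f f' hderiv hfm hfp hstep φ hinit
    hscheme
end

section
/- One-step L¹ contraction estimate: suppose f is C¹ on [γ₋,γ₊] with f(0)=0, γ₋ < 0 < γ₊, and for each j there exists θⱼ ∈ [γ₋,γ₊] with (1+2λ)φⁿ⁺¹ⱼ = (1 − Δt·f'(θⱼ))φⁿⱼ + λφⁿ⁺¹ⱼ₊₁ + λφⁿ⁺¹ⱼ₋₁, where 1 − Δt·f'(u) ≥ 0 on [γ₋,γ₊]. Let L = −min_{[γ₋,γ₊]} f'. Then Σⱼ |φⁿ⁺¹ⱼ| ≤ (1 + Δt·L) Σⱼ |φⁿⱼ| ≤ e^{LΔt} Σⱼ |φⁿⱼ|. -/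
/-!
Taking absolute values in the scheme and summing over the periodic grid, the two neighbour terms
`λ |φⁿ⁺¹ⱼ₊₁| + λ |φⁿ⁺¹ⱼ₋₁|` sum to `2λ ∑ |φⁿ⁺¹|` by shift invariance and cancel against the `2λ` on
the left, so the implicit diffusion step is an `ℓ¹` contraction. The remaining reaction coefficient
satisfies `0 ≤ 1 - Δt f'(θⱼ) ≤ 1 + Δt L`, and `1 + Δt L ≤ exp (L Δt)`.
-/

open Finset

theorem sum_abs_le_of_implicit_diffusion {G : Type*} [AddCommGroup G] [Fintype G] (s : G)
    {lam : ℝ} (hlam : 0 ≤ lam) (u w : G → ℝ)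
    (h : ∀ j, (1 + 2 * lam) * u j = w j + lam * u (j + s) + lam * u (j - s)) :
    ∑ j, |u j| ≤ ∑ j, |w j| := by
  have hpoint : ∀ j, (1 + 2 * lam) * |u j| ≤ |w j| + lam * |u (j + s)| + lam * |u (j - s)| := by
    intro j
    calc (1 + 2 * lam) * |u j| = |w j + lam * u (j + s) + lam * u (j - s)| := by
          rw [← h, abs_mul, abs_of_nonneg (by linarith : (0 : ℝ) ≤ 1 + 2 * lam)]
      _ ≤ |w j| + |lam * u (j + s)| + |lam * u (j - s)| := abs_add_three _ _ _
      _ = |w j| + lam * |u (j + s)| + lam * |u (j - s)| := by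
          rw [abs_mul, abs_mul, abs_of_nonneg hlam]
  have hplus : ∑ j, |u (j + s)| = ∑ j, |u j| := Equiv.sum_comp (Equiv.addRight s) fun j => |u j|
  have hminus : ∑ j, |u (j - s)| = ∑ j, |u j| := Equiv.sum_comp (Equiv.subRight s) fun j => |u j|
  have hsum := Finset.sum_le_sum fun j (_ : j ∈ univ) => hpoint j
  simp only [sum_add_distrib, ← mul_sum, hplus, hminus] at hsum
  linarith

theorem sum_abs_mul_le {ι : Type*} [Fintype ι] {a : ι → ℝ} {K : ℝ} (ha : ∀ j, |a j| ≤ K)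
    (v : ι → ℝ) : ∑ j, |a j * v j| ≤ K * ∑ j, |v j| := by
  rw [mul_sum]
  exact sum_le_sum fun j _ => by
    rw [abs_mul]; exact mul_le_mul_of_nonneg_right (ha j) (abs_nonneg _)

theorem semiImplicit_L1_stability_general (J : ℕ) [NeZero J] (Δt lam γm γp L : ℝ)
    (hΔt : 0 < Δt) (hlam : 0 < lam)
    (f' : ℝ → ℝ)
    (hstep : ∀ u ∈ Set.Icc γm γp, Δt * f' u ≤ 1)
    (hL : IsLeast (f' '' Set.Icc γm γp) (-L))
    (φn φn1 : ZMod J → ℝ) (θ : ZMod J → ℝ)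
    (hθ : ∀ j, θ j ∈ Set.Icc γm γp)
    (hscheme : ∀ j, (1 + 2 * lam) * φn1 j =
      (1 - Δt * f' (θ j)) * φn j + lam * φn1 (j + 1) + lam * φn1 (j - 1)) :
    (∑ j : ZMod J, |φn1 j|) ≤ (1 + Δt * L) * ∑ j : ZMod J, |φn j| ∧
    (1 + Δt * L) * (∑ j : ZMod J, |φn j|) ≤ Real.exp (L * Δt) * ∑ j : ZMod J, |φn j| := by
  have hcoef : ∀ j, |1 - Δt * f' (θ j)| ≤ 1 + Δt * L := by
    intro j
    have hnonneg : 0 ≤ 1 - Δt * f' (θ j) := by linarith [hstep (θ j) (hθ j)]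
    have hlow : -L ≤ f' (θ j) := hL.2 ⟨θ j, hθ j, rfl⟩
    rw [abs_of_nonneg hnonneg]
    nlinarith
  refine ⟨?_, ?_⟩
  · exact (sum_abs_le_of_implicit_diffusion 1 hlam.le φn1 _ hscheme).trans
      (sum_abs_mul_le hcoef φn)
  · have hexp : 1 + Δt * L ≤ Real.exp (L * Δt) := by
      linarith [Real.add_one_le_exp (L * Δt)]
    exact mul_le_mul_of_nonneg_right hexp (sum_nonneg fun j _ => abs_nonneg _)

/-- One-step L¹ contraction estimate for the semi-implicit scheme. -/
theorem semiImplicit_L1_stability (J : ℕ) [NeZero J] (Δt lam γm γp L : ℝ)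
    (hΔt : 0 < Δt) (hlam : 0 < lam) (hγm : γm < 0) (hγp : 0 < γp)
    (f f' : ℝ → ℝ)
    (hderiv : ∀ u ∈ Set.Icc γm γp, HasDerivAt f (f' u) u)
    (hf0 : f 0 = 0)
    (hstep : ∀ u ∈ Set.Icc γm γp, Δt * f' u ≤ 1)
    (hL : IsLeast (f' '' Set.Icc γm γp) (-L))
    (φn φn1 : ZMod J → ℝ) (θ : ZMod J → ℝ)
    (hθ : ∀ j, θ j ∈ Set.Icc γm γp)
    (hscheme : ∀ j, (1 + 2 * lam) * φn1 j =
      (1 - Δt * f' (θ j)) * φn j + lam * φn1 (j + 1) + lam * φn1 (j - 1)) :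
    (∑ j : ZMod J, |φn1 j|) ≤ (1 + Δt * L) * ∑ j : ZMod J, |φn j| ∧
    (1 + Δt * L) * (∑ j : ZMod J, |φn j|) ≤ Real.exp (L * Δt) * ∑ j : ZMod J, |φn j| :=
  semiImplicit_L1_stability_general J Δt lam γm γp L hΔt hlam f' hstep hL φn φn1 θ hθ hscheme
end

section
/- Energy stability of the semi-implicit scheme: let φⁿ, φⁿ⁺¹ : ZMod J → ℝ with γ₋ ≤ φⁿⱼ, φⁿ⁺¹ⱼ ≤ γ₊ for all j, satisfying (φⁿ⁺¹ⱼ − φⁿⱼ)/Δt = ε²∇₊∇₋φⁿ⁺¹ⱼ − f(φⁿⱼ) for all j. Suppose F : ℝ → ℝ is C² on [γ₋,γ₊] with F' = f, and Δt·f'(u) ≤ 2 for u ∈ [γ₋,γ₊]. Then E_h(φⁿ⁺¹) ≤ E_h(φⁿ), where E_h(φ) = (ε²/2)Σⱼ(∇₊φⱼ)²Δx + Σⱼ F(φⱼ)Δx. -/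
/-!
Since `Δt f' ≤ 2`, the function `u ↦ u² / Δt - F u` is convex, so `F` lies below its tangent line
plus `(b - a)² / Δt`. Combined with the scheme, this bounds the change of the potential part by
`(ε² / Δx) ∑ⱼ Lⱼ δⱼ`, where `L` is the second difference of `φⁿ⁺¹` and `δ = φⁿ⁺¹ - φⁿ`.
The discrete Dirichlet energy `∑ⱼ (φⱼ₊₁ - φⱼ)²` is convex with gradient `-2L` (summation by parts),
so the gradient part changes by at most `-(ε² / Δx) ∑ⱼ Lⱼ δⱼ`.
-/

open Finset

theorem ConvexOn.add_mul_sub_le_of_hasDerivAt {S : Set ℝ} {g : ℝ → ℝ} {g' x y : ℝ}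
    (hg : ConvexOn ℝ S g) (hx : x ∈ S) (hy : y ∈ S) (hgx : HasDerivAt g g' x) :
    g x + g' * (y - x) ≤ g y := by
  rcases lt_trichotomy x y with hxy | rfl | hyx
  · have := hg.le_slope_of_hasDerivAt hx hy hxy hgx
    rw [slope_def_field, le_div_iff₀ (sub_pos.2 hxy)] at this
    linarith
  · simp
  · have := hg.slope_le_of_hasDerivAt hy hx hyx hgx
    rw [slope_def_field, div_le_iff₀ (sub_pos.2 hyx)] at this
    linarith

theorem sub_sub_mul_le_half_mul_sq_of_deriv_le {S : Set ℝ} (hS : Convex ℝ S)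
    {F f f' : ℝ → ℝ} {K x y : ℝ}
    (hF : ∀ u ∈ S, HasDerivAt F (f u) u) (hf : ∀ u ∈ S, HasDerivAt f (f' u) u)
    (hK : ∀ u ∈ S, f' u ≤ K) (hx : x ∈ S) (hy : y ∈ S) :
    F y - F x - f x * (y - x) ≤ K / 2 * (y - x) ^ 2 := by
  have hG : ∀ u ∈ S, HasDerivAt (fun u ↦ K / 2 * u ^ 2 - F u) (K * u - f u) u := fun u hu ↦
    (((hasDerivAt_pow 2 u).const_mul (K / 2)).sub (hF u hu)).congr_deriv (by ring)
  have hG' : ∀ u ∈ S, HasDerivAt (fun u ↦ K * u - f u) (K - f' u) u := fun u hu ↦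
    (((hasDerivAt_id u).const_mul K).sub (hf u hu)).congr_deriv (by simp)
  have hconvex : ConvexOn ℝ S (fun u ↦ K / 2 * u ^ 2 - F u) :=
    convexOn_of_hasDerivWithinAt2_nonneg hS
      (fun u hu ↦ (hG u hu).continuousAt.continuousWithinAt)
      (fun u hu ↦ (hG u (interior_subset hu)).hasDerivWithinAt)
      (fun u hu ↦ (hG' u (interior_subset hu)).hasDerivWithinAt)
      (fun u hu ↦ sub_nonneg.2 (hK u (interior_subset hu)))
  have := hconvex.add_mul_sub_le_of_hasDerivAt hx hy (hG x hx)
  linear_combination this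

section SummationByParts

variable {G R : Type*} [AddCommGroup G] [Fintype G]

theorem Fintype.sum_sub_mul_sub_eq_neg_sum [CommRing R] (h : G) (a b : G → R) :
    ∑ j, (a (j + h) - a j) * (b (j + h) - b j) =
      -∑ j, (a (j + h) - 2 * a j + a (j - h)) * b j := by
  have hshift : ∑ j, (a (j + h) - a j) * b (j + h) = ∑ j, (a j - a (j - h)) * b j :=
    Fintype.sum_equiv (Equiv.addRight h) _ _ fun j ↦ by simp
  rw [eq_neg_iff_add_eq_zero, ← sum_add_distrib]
  calc ∑ j, ((a (j + h) - a j) * (b (j + h) - b j) + (a (j + h) - 2 * a j + a (j - h)) * b j)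
      = ∑ j, ((a (j + h) - a j) * b (j + h) - (a j - a (j - h)) * b j) :=
        Fintype.sum_congr _ _ fun j ↦ by ring
    _ = 0 := by rw [sum_sub_distrib, hshift, sub_self]

theorem Fintype.sum_sq_sub_sum_sq_le [CommRing R] [LinearOrder R] [IsStrictOrderedRing R]
    (h : G) (a b : G → R) :
    ∑ j, (a (j + h) - a j) ^ 2 - ∑ j, (b (j + h) - b j) ^ 2 ≤
      -2 * ∑ j, (a (j + h) - 2 * a j + a (j - h)) * (a j - b j) := by
  set d : G → R := fun j ↦ a j - b j
  have hsq : ∀ j, (a (j + h) - a j) ^ 2 - (b (j + h) - b j) ^ 2 =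
      2 * ((a (j + h) - a j) * (d (j + h) - d j)) - (d (j + h) - d j) ^ 2 := fun j ↦ by
    simp only [d]; ring
  rw [← sum_sub_distrib, Fintype.sum_congr _ _ hsq, sum_sub_distrib, ← mul_sum,
    Fintype.sum_sub_mul_sub_eq_neg_sum]
  have : 0 ≤ ∑ j, (d (j + h) - d j) ^ 2 := Finset.sum_nonneg fun j _ ↦ sq_nonneg _
  linarith

end SummationByParts

theorem semiImplicit_energy_stability_general (J : ℕ) [NeZero J] (Δt Δx ε γm γp : ℝ)
    (hΔt : 0 < Δt) (hΔx : 0 < Δx)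
    (F f f' : ℝ → ℝ)
    (hF : ∀ u ∈ Set.Icc γm γp, HasDerivAt F (f u) u)
    (hf : ∀ u ∈ Set.Icc γm γp, HasDerivAt f (f' u) u)
    (hstep : ∀ u ∈ Set.Icc γm γp, Δt * f' u ≤ 2)
    (φn φn1 : ZMod J → ℝ)
    (hbn : ∀ j, φn j ∈ Set.Icc γm γp) (hbn1 : ∀ j, φn1 j ∈ Set.Icc γm γp)
    (hscheme : ∀ j, (φn1 j - φn j) / Δt =
      ε ^ 2 * ((φn1 (j + 1) - 2 * φn1 j + φn1 (j - 1)) / Δx ^ 2) - f (φn j)) :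
    (ε ^ 2 / 2) * (∑ j : ZMod J, ((φn1 (j + 1) - φn1 j) / Δx) ^ 2 * Δx) +
        ∑ j : ZMod J, F (φn1 j) * Δx ≤
      (ε ^ 2 / 2) * (∑ j : ZMod J, ((φn (j + 1) - φn j) / Δx) ^ 2 * Δx) +
        ∑ j : ZMod J, F (φn j) * Δx := by
  set L : ZMod J → ℝ := fun j ↦ φn1 (j + 1) - 2 * φn1 j + φn1 (j - 1)
  have hpotential : ∀ j, (F (φn1 j) - F (φn j)) * Δx ≤ ε ^ 2 / Δx * (L j * (φn1 j - φn j)) := by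
    intro j
    have htaylor := sub_sub_mul_le_half_mul_sq_of_deriv_le (convex_Icc γm γp) hF hf
      (fun u hu ↦ (le_div_iff₀' hΔt).2 (hstep u hu)) (hbn j) (hbn1 j)
    have hpointwise : F (φn1 j) - F (φn j) ≤ ε ^ 2 / Δx ^ 2 * (L j * (φn1 j - φn j)) := by
      linear_combination htaylor + (φn1 j - φn j) * hscheme j
    calc (F (φn1 j) - F (φn j)) * Δx ≤ ε ^ 2 / Δx ^ 2 * (L j * (φn1 j - φn j)) * Δx :=
          mul_le_mul_of_nonneg_right hpointwise hΔx.le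
      _ = ε ^ 2 / Δx * (L j * (φn1 j - φn j)) := by field_simp
  have hpotential_sum := Finset.sum_le_sum fun j (_ : j ∈ univ) ↦ hpotential j
  rw [← sum_mul, sum_sub_distrib, ← mul_sum] at hpotential_sum
  have hgradient := Fintype.sum_sq_sub_sum_sq_le 1 φn1 φn
  have hrescale : ∀ φ : ZMod J → ℝ,
      ∑ j, ((φ (j + 1) - φ j) / Δx) ^ 2 * Δx = (∑ j, (φ (j + 1) - φ j) ^ 2) / Δx := by
    intro φ
    rw [sum_div]
    exact Fintype.sum_congr _ _ fun j ↦ by field_simp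
  rw [hrescale, hrescale, ← sum_mul, ← sum_mul]
  linear_combination (ε ^ 2 / (2 * Δx)) * hgradient + hpotential_sum

/-- Energy stability of the semi-implicit scheme (Theorem 3.1). -/
theorem semiImplicit_energy_stability (J : ℕ) [NeZero J] (Δt Δx ε γm γp : ℝ)
    (hΔt : 0 < Δt) (hΔx : 0 < Δx) (hε : 0 < ε) (hγ : γm < γp)
    (F f f' : ℝ → ℝ)
    (hF : ∀ u ∈ Set.Icc γm γp, HasDerivAt F (f u) u)
    (hf : ∀ u ∈ Set.Icc γm γp, HasDerivAt f (f' u) u)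
    (hcont : ContinuousOn f' (Set.Icc γm γp))
    (hstep : ∀ u ∈ Set.Icc γm γp, Δt * f' u ≤ 2)
    (φn φn1 : ZMod J → ℝ)
    (hbn : ∀ j, φn j ∈ Set.Icc γm γp) (hbn1 : ∀ j, φn1 j ∈ Set.Icc γm γp)
    (hscheme : ∀ j, (φn1 j - φn j) / Δt =
      ε ^ 2 * ((φn1 (j + 1) - 2 * φn1 j + φn1 (j - 1)) / Δx ^ 2) - f (φn j)) :
    (ε ^ 2 / 2) * (∑ j : ZMod J, ((φn1 (j + 1) - φn1 j) / Δx) ^ 2 * Δx) +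
        ∑ j : ZMod J, F (φn1 j) * Δx ≤
      (ε ^ 2 / 2) * (∑ j : ZMod J, ((φn (j + 1) - φn j) / Δx) ^ 2 * Δx) +
        ∑ j : ZMod J, F (φn j) * Δx :=
  semiImplicit_energy_stability_general J Δt Δx ε γm γp hΔt hΔx F f f' hF hf hstep φn φn1 hbn hbn1
    hscheme
end
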